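/- (Reciprocity.) Let I, K ⊆ ℤ/d with |I| = |K|. Suppose a_J (J ⊆ ℤ/d, |J| = |I|) are rational numbers with L_I = Σ_{|J| = |I|} a_J · N_J in R, and let a^∨_{J'} (J' ⊆ ℤ/d) be the unique rational numbers with P_{K^c} = Σ_{J' ⊆ ℤ/d} a^∨_{J'} · L_{J'} (unique since the L_{J'} form a ℚ-basis of R). Then (p^d + (−1)^{|I|}) · a_K = a^∨_{I^c}. -/

import Mathlib

/-!
Let `τ : R → ℚ` read off the coefficient of the top monomial `L_{ℤ/d}`; it is well defined because
the ideal of squares contains no squarefree monomial, and `τ (L_S * L_T) = [T = Sᶜ]`.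
Both sides of the theorem compute `τ (L_I * P_{Kᶜ})`. Expanding `P_{Kᶜ}` in the `L_J` gives
`a^∨_{Iᶜ}`. Expanding `L_I` in the `N_J` instead, `N_J * P_{Kᶜ} = 0` unless `J ⊆ K`, i.e. `J = K`,
because `N_i * P_i = p² l_i² - l_{i+1}² = 0`; and `N_K * P_{Kᶜ} = ∏_i (p l_i ± l_{i+1})`, in whose
expansion only the two products `∏ l_i` and `∏ l_{i+1}` are squarefree, so its top coefficient is
`p^d + (-1)^|K|`.
-/

open MvPolynomial Finset

noncomputable section

/-- The ideal of `ℚ[x_i : i ∈ ℤ/d]` generated by the squares of the variables. -/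
def sqIdeal (d : ℕ) : Ideal (MvPolynomial (ZMod d) ℚ) :=
  Ideal.span (Set.range fun i : ZMod d => (X i) ^ 2)

/-- The ring `R = ℚ[x_i : i ∈ ℤ/d]/(x_i²)`. -/
abbrev ZipRing (d : ℕ) := MvPolynomial (ZMod d) ℚ ⧸ sqIdeal d

/-- The class `l_i` of the variable `x_i` in `R`. -/
def lcl (d : ℕ) (i : ZMod d) : ZipRing d := Ideal.Quotient.mk (sqIdeal d) (X i)

/-- The Hodge–Chern monomial `L_I = ∏_{i ∈ I} l_i`. -/
def Lmon (d : ℕ) (I : Finset (ZMod d)) : ZipRing d := ∏ i ∈ I, lcl d i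

/-- `N_i = p·l_i − l_{i+1}`. -/
def Nelt (d p : ℕ) (i : ZMod d) : ZipRing d := (p : ZipRing d) * lcl d i - lcl d (i + 1)

/-- `P_i = p·l_i + l_{i+1}`. -/
def Pelt (d p : ℕ) (i : ZMod d) : ZipRing d := (p : ZipRing d) * lcl d i + lcl d (i + 1)

/-- The strata class `N_I = ∏_{i ∈ I} N_i`. -/
def Nmon (d p : ℕ) (I : Finset (ZMod d)) : ZipRing d := ∏ i ∈ I, Nelt d p i

/-- `P_I = ∏_{i ∈ I} P_i`. -/
def Pmon (d p : ℕ) (I : Finset (ZMod d)) : ZipRing d := ∏ i ∈ I, Pelt d p i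

theorem MvPolynomial.coeff_eq_zero_of_mem_span_X_sq {σ R : Type*} [CommSemiring R]
    {q : MvPolynomial σ R} (hq : q ∈ Ideal.span (Set.range fun i => (X i : MvPolynomial σ R) ^ 2))
    {m : σ →₀ ℕ} (hm : ∀ i, m i ≤ 1) : coeff m q = 0 := by
  have hspan : Set.range (fun i => (X i : MvPolynomial σ R) ^ 2) =
      (fun s => monomial s (1 : R)) '' Set.range fun i => Finsupp.single i 2 := by
    simp only [← Set.range_comp, Function.comp_def, X_pow_eq_monomial]
  rw [hspan, mem_ideal_span_monomial_image] at hq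
  by_contra h
  obtain ⟨_, ⟨i, rfl⟩, hle⟩ := hq m (mem_support_iff.mpr h)
  have hi : 2 ≤ m i := by simpa using hle i
  exact absurd (hm i) (by omega)

section ZipRing

variable (d : ℕ)

def sqfreeExp (S : Finset (ZMod d)) : ZMod d →₀ ℕ := ∑ i ∈ S, Finsupp.single i 1

theorem sqfreeExp_apply (S : Finset (ZMod d)) (i : ZMod d) :
    sqfreeExp d S i = if i ∈ S then 1 else 0 := by
  simp [sqfreeExp, Finsupp.finsetSum_apply, Finsupp.single_apply]

theorem Lmon_eq_mk (S : Finset (ZMod d)) :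
    Lmon d S = Ideal.Quotient.mk _ (monomial (sqfreeExp d S) 1) := by
  rw [sqfreeExp, monomial_sum_one, map_prod]
  rfl

theorem lcl_mul_self (i : ZMod d) : lcl d i * lcl d i = 0 := by
  rw [lcl, ← map_mul, Ideal.Quotient.eq_zero_iff_mem, ← sq]
  exact Ideal.subset_span ⟨i, rfl⟩

theorem Lmon_mul_Lmon (S T : Finset (ZMod d)) :
    Lmon d S * Lmon d T = if Disjoint S T then Lmon d (S ∪ T) else 0 := by
  classical
  split_ifs with h
  · exact (prod_union h).symm
  · obtain ⟨i, hiS, hiT⟩ := not_disjoint_iff.mp h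
    rw [Lmon, Lmon, ← mul_prod_erase S _ hiS, ← mul_prod_erase T _ hiT,
      mul_mul_mul_comm, lcl_mul_self, zero_mul]

theorem Nelt_mul_Pelt (p : ℕ) (i : ZMod d) : Nelt d p i * Pelt d p i = 0 := by
  have h : Nelt d p i * Pelt d p i =
      (p : ZipRing d) ^ 2 * (lcl d i * lcl d i) - lcl d (i + 1) * lcl d (i + 1) := by
    rw [Nelt, Pelt]
    ring
  rw [h, lcl_mul_self, lcl_mul_self, mul_zero, sub_zero]

variable [NeZero d]

theorem Nmon_mul_Pmon_compl_of_not_subset (p : ℕ) {J K : Finset (ZMod d)} (h : ¬J ⊆ K) :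
    Nmon d p J * Pmon d p Kᶜ = 0 := by
  classical
  obtain ⟨i, hiJ, hiK⟩ := not_subset.mp h
  rw [Nmon, Pmon, ← mul_prod_erase J _ hiJ, ← mul_prod_erase Kᶜ _ (mem_compl.mpr hiK),
    mul_mul_mul_comm, Nelt_mul_Pelt, zero_mul]

theorem ZMod.map_addRightEmbedding_one_eq_self_iff {S : Finset (ZMod d)} :
    S.map (addRightEmbedding 1) = S ↔ S = ∅ ∨ S = univ := by
  refine ⟨fun hS => ?_, by rintro (rfl | rfl) <;> simp⟩
  refine S.eq_empty_or_nonempty.imp id fun ⟨i, hi⟩ => eq_univ_of_forall fun j => ?_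
  have hadd : ∀ n : ℕ, i + n ∈ S := by
    intro n
    induction n with
    | zero => simpa using hi
    | succ n ih =>
      have h := mem_map_of_mem (addRightEmbedding 1) ih
      rw [hS] at h
      simpa [add_assoc] using h
  simpa using hadd (j - i).val

def topCoeff : ZipRing d →ₗ[ℚ] ℚ :=
  ((sqIdeal d).restrictScalars ℚ).liftQ (lcoeff ℚ (sqfreeExp d univ)) (fun _ hq =>
      coeff_eq_zero_of_mem_span_X_sq hq fun i => by simp [sqfreeExp_apply]) ∘ₗ
    (Submodule.Quotient.restrictScalarsEquiv ℚ (sqIdeal d)).symm.toLinearMap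

theorem topCoeff_mk (q : MvPolynomial (ZMod d) ℚ) :
    topCoeff d (Ideal.Quotient.mk _ q) = coeff (sqfreeExp d univ) q := rfl

theorem topCoeff_Lmon (S : Finset (ZMod d)) :
    topCoeff d (Lmon d S) = if S = univ then 1 else 0 := by
  rw [Lmon_eq_mk, topCoeff_mk, coeff_monomial]
  refine if_congr ⟨fun h => eq_univ_of_forall fun i => ?_, fun h => by rw [h]⟩ rfl rfl
  simpa [sqfreeExp_apply] using DFunLike.congr_fun h i

theorem topCoeff_Lmon_mul_Lmon (S T : Finset (ZMod d)) :
    topCoeff d (Lmon d S * Lmon d T) = if T = Sᶜ then 1 else 0 := by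
  have hcompl : T = Sᶜ ↔ Disjoint S T ∧ S ∪ T = univ := by
    rw [eq_compl_iff_isCompl, isCompl_comm, isCompl_iff, codisjoint_iff]
    rfl
  rw [Lmon_mul_Lmon]
  split_ifs with hdisj hT hT
  · rw [topCoeff_Lmon, if_pos (hcompl.mp hT).2]
  · rw [topCoeff_Lmon, if_neg fun hU => hT (hcompl.mpr ⟨hdisj, hU⟩)]
  · exact absurd (hcompl.mp hT).1 hdisj
  · exact map_zero _

theorem topCoeff_prod_smul_add_smul (c e : ZMod d → ℚ) :
    topCoeff d (∏ i, (c i • lcl d i + e i • lcl d (i + 1))) = ∏ i, c i + ∏ i, e i := by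
  classical
  have hterm (T : Finset (ZMod d)) :
      (∏ i ∈ T, c i • lcl d i) * ∏ i ∈ univ \ T, e i • lcl d (i + 1) =
        ((∏ i ∈ T, c i) * ∏ i ∈ Tᶜ, e i) •
          (Lmon d T * Lmon d (Tᶜ.map (addRightEmbedding 1))) := by
    rw [← compl_eq_univ_sdiff, prod_smul, prod_smul, Lmon, Lmon, prod_map, smul_mul_smul_comm]
    rfl
  have hshift (T : Finset (ZMod d)) :
      Tᶜ.map (addRightEmbedding 1) = Tᶜ ↔ T = ∅ ∨ T = univ := by
    rw [ZMod.map_addRightEmbedding_one_eq_self_iff, compl_eq_empty_iff, compl_eq_univ_iff, or_comm]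
  simp_rw [prod_add, hterm, map_sum, map_smul, topCoeff_Lmon_mul_Lmon, hshift]
  rw [sum_eq_add ∅ univ]
  · simp [add_comm]
  · exact univ_nonempty.ne_empty.symm
  · intro T _ hT
    simp [hT.1, hT.2]
  all_goals simp

theorem Nmon_mul_Pmon_compl_self (p : ℕ) (K : Finset (ZMod d)) :
    Nmon d p K * Pmon d p Kᶜ =
      ∏ i, ((p : ℚ) • lcl d i + (if i ∈ K then -1 else 1 : ℚ) • lcl d (i + 1)) := by
  classical
  rw [← prod_mul_prod_compl K, Nmon, Pmon]
  congr 1 <;> refine prod_congr rfl fun i hi => ?_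
  · rw [if_pos hi, Nelt, Nat.cast_smul_eq_nsmul, nsmul_eq_mul, neg_one_smul, sub_eq_add_neg]
  · rw [if_neg (mem_compl.mp hi), Pelt, Nat.cast_smul_eq_nsmul, nsmul_eq_mul, one_smul]

theorem topCoeff_Nmon_mul_Pmon_compl_self (p : ℕ) (K : Finset (ZMod d)) :
    topCoeff d (Nmon d p K * Pmon d p Kᶜ) = (p : ℚ) ^ d + (-1) ^ K.card := by
  classical
  rw [Nmon_mul_Pmon_compl_self, topCoeff_prod_smul_add_smul, prod_const, card_univ, ZMod.card,
    prod_ite_mem, univ_inter, prod_const]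

end ZipRing

theorem stmt4_general (d p : ℕ) [NeZero d] (I K : Finset (ZMod d))
    (hIK : I.card = K.card)
    (a : Finset (ZMod d) → ℚ)
    (ha : Lmon d I =
      ∑ J ∈ Finset.univ.powerset.filter (fun J => J.card = I.card),
        a J • Nmon d p J)
    (b : Finset (ZMod d) → ℚ)
    (hb : Pmon d p Kᶜ = ∑ J' ∈ Finset.univ.powerset, b J' • Lmon d J') :
    ((p : ℚ) ^ d + (-1) ^ I.card) * a K = b Iᶜ := by
  classical
  have hN : topCoeff d (Lmon d I * Pmon d p Kᶜ) = a K * ((p : ℚ) ^ d + (-1) ^ K.card) := by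
    rw [ha, sum_mul, map_sum, sum_eq_single_of_mem K (by simp [hIK]),
      smul_mul_assoc, map_smul, topCoeff_Nmon_mul_Pmon_compl_self, smul_eq_mul]
    intro J hJ hJK
    have hcard : J.card = K.card := hIK ▸ (mem_filter.mp hJ).2
    rw [smul_mul_assoc, Nmon_mul_Pmon_compl_of_not_subset d p
      fun hsub => hJK (eq_of_subset_of_card_le hsub hcard.ge), smul_zero, map_zero]
  have hL : topCoeff d (Lmon d I * Pmon d p Kᶜ) = b Iᶜ := by
    simp [hb, mul_sum, mul_smul_comm, topCoeff_Lmon_mul_Lmon]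
  rw [hIK, mul_comm, ← hN, hL]

/-- Reciprocity: if `L_I = Σ_{|J|=|I|} a_J N_J` and `P_{K^c} = Σ_{J'} a^∨_{J'} L_{J'}`
(the latter expansion being unique since the `L_{J'}` form a ℚ-basis of `R`), then
`(p^d + (−1)^{|I|}) · a_K = a^∨_{I^c}`. -/
theorem stmt4 (d p : ℕ) [NeZero d] (hp : p.Prime) (I K : Finset (ZMod d))
    (hIK : I.card = K.card)
    (a : Finset (ZMod d) → ℚ)
    (ha : Lmon d I =
      ∑ J ∈ Finset.univ.powerset.filter (fun J => J.card = I.card),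
        a J • Nmon d p J)
    (b : Finset (ZMod d) → ℚ)
    (hb : Pmon d p Kᶜ = ∑ J' ∈ Finset.univ.powerset, b J' • Lmon d J') :
    ((p : ℚ) ^ d + (-1) ^ I.card) * a K = b Iᶜ :=
  stmt4_general d p I K hIK a ha b hb
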